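/- Let Δ be a simplicial complex with a surjective finite abelian group structure 𝒢. Every element (S, h) of the independence poset Ind(E, Δ, 𝒢) lies above exactly one minimal element, namely (∅, π_S(h)); consequently the Hasse diagram of Ind(E, Δ, 𝒢) has exactly |𝒢(∅)| connected components. -/

import Mathlib

open Finset

/-- An assignment of finite abelian groups to the finite subsets of `E`. -/
structure GAssign (E : Type*) [DecidableEq E] where
  G : Finset E → Type
  grp : ∀ S, AddCommGroup (G S)
  fin : ∀ S, Fintype (G S)

instance {E : Type*} [DecidableEq E] (A : GAssign E) (S : Finset E) :
    AddCommGroup (A.G S) := A.grp S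

instance {E : Type*} [DecidableEq E] (A : GAssign E) (S : Finset E) :
    Fintype (A.G S) := A.fin S

/-- A surjective finite abelian group structure on the simplicial complex `Δ`:
finite abelian groups attached to faces, with surjective structure maps along covers
satisfying the commuting-squares condition. -/
structure SFAGS {E : Type*} [DecidableEq E] (Δ : Finset (Finset E)) extends GAssign E where
  π : ∀ (S : Finset E) (a : E), a ∉ S → (toGAssign.G (insert a S) →+ toGAssign.G S)
  surj : ∀ (S : Finset E) (a : E) (ha : a ∉ S), insert a S ∈ Δ →
    Function.Surjective (π S a ha)
  comm : ∀ (S : Finset E) (a b : E) (ha : a ∉ S) (hb : b ∉ S)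
    (hab : a ∉ insert b S) (hba : b ∉ insert a S),
    insert a (insert b S) ∈ Δ →
    ∀ g : toGAssign.G (insert a (insert b S)),
      π S b hb (π (insert b S) a hab g) =
      π S a ha (π (insert a S) b hba
        (cast (congrArg toGAssign.G (Finset.insert_comm a b S)) g))

namespace SFAGS

variable {E : Type*} [DecidableEq E] {Δ : Finset (Finset E)}

/-- Transport along an equality of finsets, as a group homomorphism. -/
def castHom (𝒢 : SFAGS Δ) {S T : Finset E} (h : S = T) : 𝒢.G S →+ 𝒢.G T := by
  subst h; exact AddMonoidHom.id _

/-- The composite of the structure maps along a list enumerating a face. -/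
def chainMap (𝒢 : SFAGS Δ) : (L : List E) → L.Nodup → (𝒢.G L.toFinset →+ 𝒢.G ∅)
  | [], _ => 𝒢.castHom (by simp)
  | a :: L, h =>
      ((𝒢.chainMap L (List.nodup_cons.mp h).2).comp
        (𝒢.π L.toFinset a (by simpa using (List.nodup_cons.mp h).1))).comp
        (𝒢.castHom (by simp))

/-- The composite map `π_S : 𝒢(S) → 𝒢(∅)`. -/
noncomputable def piS (𝒢 : SFAGS Δ) (S : Finset E) : 𝒢.G S →+ 𝒢.G ∅ :=
  (𝒢.chainMap S.toList S.nodup_toList).comp (𝒢.castHom S.toList_toFinset.symm)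

/-- The elements of the independence poset `Ind(E, Δ, 𝒢)`: pairs `(S, g)` with
`S ∈ Δ` and `g ∈ 𝒢(S)`. -/
def Elem (𝒢 : SFAGS Δ) := {p : Σ S : Finset E, 𝒢.G S // p.1 ∈ Δ}

/-- The cover relation of the independence poset: `(insert a S, g)` covers `(S, h)`
iff `π_{S,a}(g) = h`. -/
def CovBy (𝒢 : SFAGS Δ) (p q : 𝒢.Elem) : Prop :=
  ∃ (a : E) (ha : a ∉ p.1.1) (h : q.1.1 = insert a p.1.1),
    𝒢.π p.1.1 a ha (𝒢.castHom h q.1.2) = p.1.2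

/-- The order of the independence poset: reflexive-transitive closure of the covers. -/
def le (𝒢 : SFAGS Δ) : 𝒢.Elem → 𝒢.Elem → Prop := Relation.ReflTransGen 𝒢.CovBy

end SFAGS

/-! The composite `π_S` is a priori defined through one enumeration of `S`; the commuting
squares make it independent of the enumeration, provided every intermediate set is a face, which
is where down-closure of `Δ` enters. Hence `π_{insert a S} = π_S ∘ π_{S,a}`, so `π_S` is
constant along covers, while peeling off the elements of `S` one at a time shows that `(S, g)`
lies above `(∅, π_S g)`. Thus `(S, g) ↦ π_S g` identifies the connected components with `𝒢(∅)`. -/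

namespace SFAGS

variable {E : Type*} [DecidableEq E] {Δ : Finset (Finset E)} (𝒢 : SFAGS Δ)

theorem castHom_castHom {S T U : Finset E} (h₁ : S = T) (h₂ : T = U) (g : 𝒢.G S) :
    𝒢.castHom h₂ (𝒢.castHom h₁ g) = 𝒢.castHom (h₁.trans h₂) g := by
  subst h₁ h₂; rfl

theorem cast_eq_castHom {S T : Finset E} (e : S = T) (g : 𝒢.G S) :
    cast (congrArg 𝒢.G e) g = 𝒢.castHom e g := by
  subst e; rfl

/-- `π_{S,a}` read on any `T` propositionally equal to `insert a S`: the casts in `chainMap`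
are absorbed into `hT`. -/
def proj {S T : Finset E} (a : E) (ha : a ∉ S) (hT : T = insert a S) : 𝒢.G T →+ 𝒢.G S :=
  (𝒢.π S a ha).comp (𝒢.castHom hT)

theorem proj_castHom {S T T' : Finset E} (a : E) (ha : a ∉ S) (hT : T = insert a S)
    (e : T' = T) (g : 𝒢.G T') :
    𝒢.proj a ha hT (𝒢.castHom e g) = 𝒢.proj a ha (e.trans hT) g := by
  subst e; rfl

theorem castHom_proj {S S' T : Finset E} (a : E) (ha : a ∉ S) (ha' : a ∉ S')
    (hT : T = insert a S) (e : S = S') (g : 𝒢.G T) :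
    𝒢.castHom e (𝒢.proj a ha hT g) =
      𝒢.proj a ha' (hT.trans (congrArg (insert a) e)) g := by
  subst e; rfl

theorem proj_comm {S U U' T : Finset E} {a b : E} (ha : a ∉ S) (hb : b ∉ S) (haU : a ∉ U)
    (hbU' : b ∉ U') (hU : U = insert b S) (hU' : U' = insert a S) (hT : T = insert a U)
    (hTΔ : T ∈ Δ) (g : 𝒢.G T) :
    𝒢.proj b hb hU (𝒢.proj a haU hT g) =
      𝒢.proj a ha hU' (𝒢.proj b hbU' (by rw [hT, hU, hU', Finset.insert_comm]) g) := by
  subst hU hU' hT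
  exact (𝒢.comm S a b ha hb haU hbU' hTΔ g).trans (by rw [cast_eq_castHom]; rfl)

theorem chainMap_cons (a : E) (L : List E) (h : (a :: L).Nodup) (g : 𝒢.G (a :: L).toFinset) :
    𝒢.chainMap (a :: L) h g =
      𝒢.chainMap L h.of_cons
        (𝒢.proj a (mt List.mem_toFinset.mp (List.nodup_cons.mp h).1) List.toFinset_cons g) :=
  rfl

theorem chainMap_perm (hΔ : IsLowerSet (Δ : Set (Finset E))) {L₁ L₂ : List E}
    (p : L₁.Perm L₂) (h₁ : L₁.Nodup) (h₂ : L₂.Nodup) (hL : L₁.toFinset ∈ Δ)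
    (g : 𝒢.G L₁.toFinset) :
    𝒢.chainMap L₁ h₁ g =
      𝒢.chainMap L₂ h₂ (𝒢.castHom (List.toFinset_eq_of_perm _ _ p) g) := by
  induction p with
  | nil => rfl
  | @cons a l₁ l₂ p ih =>
    have hl₁ : l₁.toFinset ∈ Δ :=
      hΔ (by rw [List.toFinset_cons]; exact Finset.subset_insert a _) hL
    rw [chainMap_cons, chainMap_cons, ih _ _ hl₁, castHom_proj, proj_castHom]
  | swap x y l =>
    rw [chainMap_cons, chainMap_cons, chainMap_cons, chainMap_cons]
    congr 1
    rw [proj_comm (hTΔ := hL), proj_castHom]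
  | @trans l₁ l₂ l₃ p₁₂ _ ih₁₂ ih₂₃ =>
    rw [ih₁₂ h₁ (p₁₂.nodup_iff.mp h₁) hL, ih₂₃ _ h₂ (List.toFinset_eq_of_perm _ _ p₁₂ ▸ hL),
      castHom_castHom]

theorem piS_castHom {S T : Finset E} (e : S = T) (g : 𝒢.G S) :
    𝒢.piS T (𝒢.castHom e g) = 𝒢.piS S g := by
  subst e; rfl

theorem piS_empty (g : 𝒢.G ∅) : 𝒢.piS ∅ g = g := by
  suffices ∀ (L : List E) (hL : L = []) (h : L.Nodup) (e : ∅ = L.toFinset),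
      𝒢.chainMap L h (𝒢.castHom e g) = g from this _ Finset.toList_empty _ _
  rintro _ rfl _ _
  rfl

theorem piS_insert (hΔ : IsLowerSet (Δ : Set (Finset E))) {S : Finset E} {a : E} (ha : a ∉ S)
    (hS : insert a S ∈ Δ) (g : 𝒢.G (insert a S)) :
    𝒢.piS (insert a S) g = 𝒢.piS S (𝒢.π S a ha g) := by
  have hnd : (a :: S.toList).Nodup :=
    (Finset.toList_insert ha).nodup_iff.mp (Finset.nodup_toList _)
  rw [piS, AddMonoidHom.comp_apply, chainMap_perm 𝒢 hΔ (Finset.toList_insert ha) _ hnd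
    (by rwa [Finset.toList_toFinset]), chainMap_cons, castHom_castHom, proj_castHom, piS,
    AddMonoidHom.comp_apply]
  exact congrArg _ (castHom_proj 𝒢 a ha _ rfl _ g).symm

theorem piS_eq_of_covBy (hΔ : IsLowerSet (Δ : Set (Finset E))) {p q : 𝒢.Elem}
    (h : 𝒢.CovBy p q) : 𝒢.piS q.1.1 q.1.2 = 𝒢.piS p.1.1 p.1.2 := by
  obtain ⟨a, ha, e, hq⟩ := h
  rw [← piS_castHom 𝒢 e, piS_insert 𝒢 hΔ ha (e ▸ q.2), hq]

theorem piS_eq_of_le (hΔ : IsLowerSet (Δ : Set (Finset E))) {p q : 𝒢.Elem} (h : 𝒢.le p q) :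
    𝒢.piS q.1.1 q.1.2 = 𝒢.piS p.1.1 p.1.2 := by
  induction h with
  | refl => rfl
  | tail _ hcov ih => rw [piS_eq_of_covBy 𝒢 hΔ hcov, ih]

theorem empty_piS_le (hΔ : IsLowerSet (Δ : Set (Finset E))) (hempty : ∅ ∈ Δ) (p : 𝒢.Elem) :
    𝒢.le ⟨⟨∅, 𝒢.piS p.1.1 p.1.2⟩, hempty⟩ p := by
  obtain ⟨⟨S, g⟩, hS⟩ := p
  induction S using Finset.induction_on with
  | empty => rw [piS_empty]; exact .refl
  | @insert a S ha ih =>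
    have hS' : S ∈ Δ := hΔ (Finset.subset_insert a S) hS
    have hcov : 𝒢.CovBy ⟨⟨S, 𝒢.π S a ha g⟩, hS'⟩ ⟨⟨insert a S, g⟩, hS⟩ :=
      ⟨a, ha, rfl, rfl⟩
    simpa only [le, piS_insert 𝒢 hΔ ha hS] using (ih (𝒢.π S a ha g) hS').tail hcov

noncomputable def componentsEquiv (hΔ : IsLowerSet (Δ : Set (Finset E))) (hempty : ∅ ∈ Δ) :
    Quot (fun p q : 𝒢.Elem => 𝒢.CovBy p q ∨ 𝒢.CovBy q p) ≃ 𝒢.G ∅ where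
  toFun := Quot.lift (fun p => 𝒢.piS p.1.1 p.1.2) fun _ _ h =>
    h.elim (fun h => (piS_eq_of_covBy 𝒢 hΔ h).symm) (piS_eq_of_covBy 𝒢 hΔ)
  invFun g := Quot.mk _ ⟨⟨∅, g⟩, hempty⟩
  left_inv := Quot.ind fun p => Quot.eqvGen_sound <|
    Relation.EqvGen.reflTransGen_le_eqvGen _ _ _ <|
      Relation.ReflTransGen.mono (fun _ _ => Or.inl) _ _ (empty_piS_le 𝒢 hΔ hempty p)
  right_inv := piS_empty 𝒢

end SFAGS

theorem ind_poset_components_general {E : Type*} [DecidableEq E]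
    {Δ : Finset (Finset E)} (𝒢 : SFAGS Δ)
    (hdc : ∀ ⦃S T : Finset E⦄, S ⊆ T → T ∈ Δ → S ∈ Δ) (hempty : ∅ ∈ Δ) :
    (∀ p : 𝒢.Elem,
      𝒢.le ⟨⟨∅, 𝒢.piS p.1.1 p.1.2⟩, hempty⟩ p ∧
      ∀ g : 𝒢.G ∅, 𝒢.le ⟨⟨∅, g⟩, hempty⟩ p → g = 𝒢.piS p.1.1 p.1.2) ∧
    Nat.card (Quot (fun p q : 𝒢.Elem => 𝒢.CovBy p q ∨ 𝒢.CovBy q p)) =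
      Nat.card (𝒢.G ∅) := by
  have hΔ : IsLowerSet (Δ : Set (Finset E)) := fun _ _ hST hT => hdc hST hT
  refine ⟨fun p => ⟨𝒢.empty_piS_le hΔ hempty p, fun g hg => ?_⟩,
    Nat.card_congr (𝒢.componentsEquiv hΔ hempty)⟩
  rw [𝒢.piS_eq_of_le hΔ hg, 𝒢.piS_empty]

/-- Every element `(S, h)` of `Ind(E, Δ, 𝒢)` lies above exactly one minimal
element, namely `(∅, π_S(h))`; consequently the Hasse diagram of `Ind(E, Δ, 𝒢)` has
exactly `|𝒢(∅)|` connected components. -/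
theorem ind_poset_components {E : Type*} [DecidableEq E] [Fintype E]
    {Δ : Finset (Finset E)} (𝒢 : SFAGS Δ)
    (hdc : ∀ ⦃S T : Finset E⦄, S ⊆ T → T ∈ Δ → S ∈ Δ) (hempty : ∅ ∈ Δ) :
    (∀ p : 𝒢.Elem,
      𝒢.le ⟨⟨∅, 𝒢.piS p.1.1 p.1.2⟩, hempty⟩ p ∧
      ∀ g : 𝒢.G ∅, 𝒢.le ⟨⟨∅, g⟩, hempty⟩ p → g = 𝒢.piS p.1.1 p.1.2) ∧
    Nat.card (Quot (fun p q : 𝒢.Elem => 𝒢.CovBy p q ∨ 𝒢.CovBy q p)) =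
      Nat.card (𝒢.G ∅) :=
  ind_poset_components_general 𝒢 hdc hempty
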